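/- For the quadratic nonlinearity u² on 𝕋²: for a large integer N, let û_N(n,τ) = 1_{n=Ne₁}1_{[-1,1]}(τ+N²) and v̂_N(n,τ) = 1_{n=Ne₂}1_{[-1,1]}(τ+N²), where e₁=(1,0), e₂=(0,1). Then the space-time Fourier transform of the product satisfies 𝓕(u_N v_N)(n,τ) = 1_{n=N(e₁+e₂)} · max{0, min{2-τ-2N², 2+τ+2N²}} ≥ 1_{n=N(e₁+e₂)} 1_{[-1,1]}(τ+2N²). Consequently, for any s, b ∈ ℝ: ‖u_N‖_{X^{s,b}} ∼ N^s, ‖v_N‖_{X^{s,b}} ∼ N^s, and ‖⟨n⟩^s⟨τ+|n|²⟩^{b-1} 𝓕(u_N v_N)‖_{ℓ²_n L²_τ} ∼ N^s (with implicit constants independent of N). -/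

import Mathlib

open MeasureTheory

noncomputable def jap (n : ℤ × ℤ) : ℝ := Real.sqrt (1 + ((n.1 : ℝ) ^ 2 + (n.2 : ℝ) ^ 2))

noncomputable def nsq (n : ℤ × ℤ) : ℝ := (n.1 : ℝ) ^ 2 + (n.2 : ℝ) ^ 2

noncomputable def jb (x : ℝ) : ℝ := Real.sqrt (1 + x ^ 2)

noncomputable def Xnorm (s b : ℝ) (u : ℤ × ℤ → ℝ → ℂ) : ℝ :=
  Real.sqrt (∑' n : ℤ × ℤ, ∫ τ : ℝ, (jap n ^ s * jb (τ + nsq n) ^ b * ‖u n τ‖) ^ 2)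

noncomputable def conv (u v : ℤ × ℤ → ℝ → ℂ) : ℤ × ℤ → ℝ → ℂ :=
  fun n τ => ∑' n₁ : ℤ × ℤ, ∫ τ₁ : ℝ, u n₁ τ₁ * v (n - n₁) (τ - τ₁)

/-- `û_N(n,τ) = 1_{n = N e₁} 1_{[-1,1]}(τ + N²)`. -/
noncomputable def uN (N : ℕ) : ℤ × ℤ → ℝ → ℂ :=
  fun n τ => if n = ((N : ℤ), 0) then
    ((Set.indicator (Set.Icc (-1 : ℝ) 1) (fun _ => (1 : ℝ)) (τ + (N : ℝ) ^ 2) : ℝ) : ℂ)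
  else 0

/-- `v̂_N(n,τ) = 1_{n = N e₂} 1_{[-1,1]}(τ + N²)`. -/
noncomputable def vN (N : ℕ) : ℤ × ℤ → ℝ → ℂ :=
  fun n τ => if n = (0, (N : ℤ)) then
    ((Set.indicator (Set.Icc (-1 : ℝ) 1) (fun _ => (1 : ℝ)) (τ + (N : ℝ) ^ 2) : ℝ) : ℂ)
  else 0

open Set

/-!
Each of `û_N`, `v̂_N` and `𝓕(u_N v_N)` sits at a single frequency `m` with `N ≤ ⟨m⟩ ≤ √3 N` and
has a fixed profile in the modulation variable `τ + |m|²`. For the product that profile is the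
self-convolution of `1_{[-1,1]}`, the tent, with no shift because `N e₁ ⊥ N e₂` gives
`|N(e₁ + e₂)|² = |N e₁|² + |N e₂|²`. For such a function the `X^{s,b}` norm factors as `⟨m⟩^s`
times the weighted `L²` norm of the profile, a positive constant independent of `N`.
-/

noncomputable def singleFreq (m : ℤ × ℤ) (g : ℝ → ℝ) : ℤ × ℤ → ℝ → ℂ :=
  fun n τ => if n = m then ((g (τ + nsq m) : ℝ) : ℂ) else 0

noncomputable def box : ℝ → ℝ := indicator (Icc (-1) 1) (fun _ => 1)

noncomputable def tent (x : ℝ) : ℝ := max 0 (min (2 - x) (2 + x))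

lemma box_nonneg (x : ℝ) : 0 ≤ box x :=
  indicator_nonneg (fun _ _ => zero_le_one) x

lemma box_of_mem {x : ℝ} (hx : x ∈ Icc (-1 : ℝ) 1) : box x = 1 := indicator_of_mem hx _

lemma box_le_one (x : ℝ) : box x ≤ 1 :=
  indicator_le_self' (fun _ _ => zero_le_one) x

lemma box_le_tent (x : ℝ) : box x ≤ tent x := by
  by_cases hx : x ∈ Icc (-1 : ℝ) 1
  · rw [box_of_mem hx]
    exact le_max_of_le_right (le_min (by linarith [hx.2]) (by linarith [hx.1]))
  · rw [box, indicator_of_notMem hx]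
    exact le_max_left _ _

lemma tent_nonneg (x : ℝ) : 0 ≤ tent x := le_max_left _ _

lemma tent_le_two (x : ℝ) : tent x ≤ 2 := by
  unfold tent; grind

lemma tent_eq_zero {x : ℝ} (hx : x ∉ Icc (-2 : ℝ) 2) : tent x = 0 := by
  rw [mem_Icc, not_and_or, not_le, not_le] at hx
  unfold tent; grind

lemma box_sub_eq_indicator (y x : ℝ) :
    box (y - x) = indicator (Icc (y - 1) (y + 1)) (fun _ => 1) x := by
  simp only [box, indicator_apply, mem_Icc]
  exact if_congr ⟨fun h => ⟨by linarith, by linarith⟩, fun h => ⟨by linarith, by linarith⟩⟩ rfl rfl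

lemma integral_box_mul_box_sub (y : ℝ) : ∫ x, box x * box (y - x) = tent y := by
  have hprod : ∀ x, box x * box (y - x)
      = indicator (Icc (max (-1) (y - 1)) (min 1 (y + 1))) (fun _ => (1 : ℝ)) x := by
    intro x
    rw [box_sub_eq_indicator, box, ← inter_indicator_mul, Icc_inter_Icc, mul_one]
  simp only [hprod, integral_indicator_const _ measurableSet_Icc, Real.volume_real_Icc,
    smul_eq_mul, mul_one, tent]
  grind

lemma conv_singleFreq (m₁ m₂ : ℤ × ℤ) (g₁ g₂ : ℝ → ℝ) (n : ℤ × ℤ) (τ : ℝ) :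
    conv (singleFreq m₁ g₁) (singleFreq m₂ g₂) n τ
      = if n = m₁ + m₂ then
          ((∫ x, g₁ x * g₂ (τ + nsq m₁ + nsq m₂ - x) : ℝ) : ℂ)
        else 0 := by
  unfold conv
  rw [tsum_eq_single m₁ (fun n₁ hn₁ => by simp [singleFreq, hn₁])]
  by_cases hn : n = m₁ + m₂
  · subst hn
    simp only [singleFreq, add_sub_cancel_left, if_true]
    rw [← integral_add_right_eq_self (fun x => g₁ x * g₂ (τ + nsq m₁ + nsq m₂ - x)) (nsq m₁),
      ← integral_complex_ofReal]
    congr 1; funext τ₁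
    push_cast
    congr 3; ring
  · have hsub : n - m₁ ≠ m₂ := fun h => hn (by rw [← h, add_sub_cancel])
    simp [singleFreq, hsub, hn]

lemma uN_eq_singleFreq (N : ℕ) : uN N = singleFreq ((N : ℤ), 0) box := by
  funext n τ; simp [uN, singleFreq, box, nsq]

lemma vN_eq_singleFreq (N : ℕ) : vN N = singleFreq (0, (N : ℤ)) box := by
  funext n τ; simp [vN, singleFreq, box, nsq]

lemma nsq_natCast_zero (N : ℕ) : nsq ((N : ℤ), 0) = (N : ℝ) ^ 2 := by simp [nsq]

lemma nsq_zero_natCast (N : ℕ) : nsq (0, (N : ℤ)) = (N : ℝ) ^ 2 := by simp [nsq]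

lemma nsq_diag (N : ℕ) : nsq ((N : ℤ), (N : ℤ)) = 2 * (N : ℝ) ^ 2 := by
  simp only [nsq, Int.cast_natCast]; ring

lemma conv_uN_vN (N : ℕ) : conv (uN N) (vN N) = singleFreq ((N : ℤ), (N : ℤ)) tent := by
  funext n τ
  have hsum : ((N : ℤ), (0 : ℤ)) + (0, (N : ℤ)) = ((N : ℤ), (N : ℤ)) := by simp
  have hres : τ + nsq ((N : ℤ), 0) + nsq (0, (N : ℤ)) = τ + nsq ((N : ℤ), (N : ℤ)) := by
    rw [nsq_natCast_zero, nsq_zero_natCast, nsq_diag]; ring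
  rw [uN_eq_singleFreq, vN_eq_singleFreq, conv_singleFreq, hsum, hres, integral_box_mul_box_sub]
  rfl

lemma Xnorm_singleFreq (s b : ℝ) (m : ℤ × ℤ) (g : ℝ → ℝ) :
    Xnorm s b (singleFreq m g) = jap m ^ s * √(∫ x, (jb x ^ b * |g x|) ^ 2) := by
  have hoff : ∀ n ≠ m, ∫ τ, (jap n ^ s * jb (τ + nsq n) ^ b * ‖singleFreq m g n τ‖) ^ 2 = 0 :=
    fun n hn => by simp [singleFreq, hn]
  have hon : ∀ τ, (jap m ^ s * jb (τ + nsq m) ^ b * ‖singleFreq m g m τ‖) ^ 2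
      = (jap m ^ s) ^ 2 * (jb (τ + nsq m) ^ b * |g (τ + nsq m)|) ^ 2 := by
    intro τ; simp only [singleFreq, if_true, Complex.norm_real, Real.norm_eq_abs]; ring
  rw [Xnorm, tsum_eq_single m hoff, integral_congr_ae (.of_forall hon), integral_const_mul,
    integral_add_right_eq_self (fun x => (jb x ^ b * |g x|) ^ 2),
    Real.sqrt_mul (sq_nonneg _), Real.sqrt_sq (by unfold jap; positivity)]

lemma jb_pos (x : ℝ) : 0 < jb x := Real.sqrt_pos.2 (by positivity)

lemma continuous_jb : Continuous jb := by unfold jb; fun_prop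

lemma continuous_jb_rpow (b : ℝ) : Continuous (fun x => jb x ^ b) :=
  continuous_jb.rpow_const (fun x => Or.inl (jb_pos x).ne')

lemma integrable_weight_mul_sq {g : ℝ → ℝ} (b : ℝ) {M R : ℝ} (hg : Measurable g)
    (hM : ∀ x, |g x| ≤ M) (hR : ∀ x ∉ Icc (-R) R, g x = 0) :
    Integrable (fun x => (jb x ^ b * |g x|) ^ 2) := by
  have hdom : Integrable (indicator (Icc (-R) R) (fun x => (jb x ^ b * M) ^ 2)) :=
    (integrable_indicator_iff measurableSet_Icc).2
      (((continuous_jb_rpow b).mul continuous_const).pow 2).integrableOn_Icc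
  refine hdom.mono' ?_ (.of_forall fun x => ?_)
  · exact (((continuous_jb_rpow b).measurable.mul hg.abs).pow_const 2).aestronglyMeasurable
  · rw [Real.norm_eq_abs, abs_of_nonneg (sq_nonneg _)]
    by_cases hx : x ∈ Icc (-R) R
    · rw [indicator_of_mem hx]
      have hw := (Real.rpow_pos_of_pos (jb_pos x) b).le
      exact pow_le_pow_left₀ (mul_nonneg hw (abs_nonneg _)) (mul_le_mul_of_nonneg_left (hM x) hw) 2
    · simp [indicator_of_notMem hx, hR x hx]

lemma integral_weight_mul_sq_pos {g : ℝ → ℝ} (b : ℝ)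
    (hint : Integrable (fun x => (jb x ^ b * |g x|) ^ 2))
    (hsupp : Icc (-1) 1 ⊆ Function.support g) :
    0 < ∫ x, (jb x ^ b * |g x|) ^ 2 := by
  rw [integral_pos_iff_support_of_nonneg (fun x => sq_nonneg _) hint]
  calc (0 : ENNReal) < volume (Icc (-1 : ℝ) 1) := by rw [Real.volume_Icc]; norm_num
    _ ≤ _ := measure_mono fun x hx =>
      pow_ne_zero 2 (mul_ne_zero (Real.rpow_pos_of_pos (jb_pos x) b).ne' (abs_ne_zero.2 (hsupp hx)))

lemma integral_weight_mul_box_sq_pos (b : ℝ) : 0 < ∫ x, (jb x ^ b * |box x|) ^ 2 := by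
  refine integral_weight_mul_sq_pos b (integrable_weight_mul_sq b (M := 1) (R := 1)
    (measurable_const.indicator measurableSet_Icc)
    (fun x => (abs_of_nonneg (box_nonneg x)).trans_le (box_le_one x))
    (fun x hx => indicator_of_notMem hx _)) (fun x hx => ?_)
  simp [box_of_mem hx]

lemma integral_weight_mul_tent_sq_pos (b : ℝ) : 0 < ∫ x, (jb x ^ b * |tent x|) ^ 2 := by
  have htent : Continuous tent := by unfold tent; fun_prop
  refine integral_weight_mul_sq_pos b (integrable_weight_mul_sq b htent.measurable
    (fun x => (abs_of_nonneg (tent_nonneg x)).trans_le (tent_le_two x))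
    (fun x hx => tent_eq_zero hx)) (fun x hx => ?_)
  exact (zero_lt_one.trans_le (box_of_mem hx ▸ box_le_tent x)).ne'

lemma rpow_bounds_of_le_of_le_mul (s : ℝ) {k x y : ℝ} (hk : 0 ≤ k) (hy : 0 < y) (hyx : y ≤ x)
    (hxy : x ≤ k * y) : min 1 (k ^ s) * y ^ s ≤ x ^ s ∧ x ^ s ≤ max 1 (k ^ s) * y ^ s := by
  have hx : 0 < x := hy.trans_le hyx
  have hys : 0 ≤ y ^ s := Real.rpow_nonneg hy.le s
  have hky : (k * y) ^ s = k ^ s * y ^ s := Real.mul_rpow hk hy.le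
  rcases le_total 0 s with hs | hs
  · constructor
    · calc min 1 (k ^ s) * y ^ s ≤ 1 * y ^ s := by gcongr; exact min_le_left _ _
        _ ≤ x ^ s := by rw [one_mul]; exact Real.rpow_le_rpow hy.le hyx hs
    · calc x ^ s ≤ k ^ s * y ^ s := hky ▸ Real.rpow_le_rpow hx.le hxy hs
        _ ≤ max 1 (k ^ s) * y ^ s := by gcongr; exact le_max_right _ _
  · constructor
    · calc min 1 (k ^ s) * y ^ s ≤ k ^ s * y ^ s := by gcongr; exact min_le_right _ _
        _ ≤ x ^ s := hky ▸ Real.rpow_le_rpow_of_nonpos hx hxy hs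
    · calc x ^ s ≤ 1 * y ^ s := by rw [one_mul]; exact Real.rpow_le_rpow_of_nonpos hy hyx hs
        _ ≤ max 1 (k ^ s) * y ^ s := by gcongr; exact le_max_left _ _

lemma jap_bounds {N : ℝ} (hN : 1 ≤ N) {m : ℤ × ℤ} (hlo : N ^ 2 ≤ nsq m)
    (hhi : nsq m ≤ 2 * N ^ 2) : N ≤ jap m ∧ jap m ≤ √3 * N := by
  have hjap : jap m = √(1 + nsq m) := rfl
  refine ⟨hjap ▸ Real.le_sqrt_of_sq_le (by linarith), ?_⟩
  rw [hjap, ← Real.sqrt_sq (by linarith : 0 ≤ N), ← Real.sqrt_mul (by norm_num)]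
  exact Real.sqrt_le_sqrt (by nlinarith)

lemma exists_Xnorm_singleFreq_bounds (s b : ℝ) {g : ℝ → ℝ}
    (hg : 0 < ∫ x, (jb x ^ b * |g x|) ^ 2) :
    ∃ c C : ℝ, 0 < c ∧ 0 < C ∧ ∀ N : ℝ, 1 ≤ N → ∀ m : ℤ × ℤ, N ^ 2 ≤ nsq m → nsq m ≤ 2 * N ^ 2 →
      c * N ^ s ≤ Xnorm s b (singleFreq m g) ∧ Xnorm s b (singleFreq m g) ≤ C * N ^ s := by
  set K := √(∫ x, (jb x ^ b * |g x|) ^ 2)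
  have hK : 0 < K := Real.sqrt_pos.2 hg
  refine ⟨min 1 (√3 ^ s) * K, max 1 (√3 ^ s) * K,
    mul_pos (lt_min one_pos (Real.rpow_pos_of_pos (by positivity) s)) hK,
    mul_pos (one_pos.trans_le (le_max_left _ _)) hK, fun N hN m hlo hhi => ?_⟩
  obtain ⟨hjlo, hjhi⟩ := jap_bounds hN hlo hhi
  obtain ⟨hlo', hhi'⟩ := rpow_bounds_of_le_of_le_mul s (by positivity) (by linarith) hjlo hjhi
  rw [Xnorm_singleFreq]
  constructor <;> nlinarith

/-- `𝓕(u_N v_N)(n,τ) = 1_{n=N(e₁+e₂)} max{0, min{2-τ-2N², 2+τ+2N²}}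
≥ 1_{n=N(e₁+e₂)} 1_{[-1,1]}(τ+2N²)`, and for any `s, b`,
`‖u_N‖_{X^{s,b}} ∼ ‖v_N‖_{X^{s,b}} ∼ ‖⟨n⟩^s⟨τ+|n|²⟩^{b-1}𝓕(u_N v_N)‖_{ℓ²L²} ∼ N^s`. -/
theorem stmt6 (s b : ℝ) :
    ∃ c C : ℝ, 0 < c ∧ 0 < C ∧ ∀ N : ℕ, 1 ≤ N →
      (∀ (n : ℤ × ℤ) (τ : ℝ),
        conv (uN N) (vN N) n τ
          = if n = ((N : ℤ), (N : ℤ)) then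
              ((max 0 (min (2 - τ - 2 * (N : ℝ) ^ 2) (2 + τ + 2 * (N : ℝ) ^ 2)) : ℝ) : ℂ)
            else 0)
      ∧ (∀ (n : ℤ × ℤ) (τ : ℝ),
        (if n = ((N : ℤ), (N : ℤ)) then
            Set.indicator (Set.Icc (-1 : ℝ) 1) (fun _ => (1 : ℝ)) (τ + 2 * (N : ℝ) ^ 2)
          else 0)
        ≤ ‖conv (uN N) (vN N) n τ‖)
      ∧ c * (N : ℝ) ^ s ≤ Xnorm s b (uN N) ∧ Xnorm s b (uN N) ≤ C * (N : ℝ) ^ s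
      ∧ c * (N : ℝ) ^ s ≤ Xnorm s b (vN N) ∧ Xnorm s b (vN N) ≤ C * (N : ℝ) ^ s
      ∧ c * (N : ℝ) ^ s ≤ Xnorm s (b - 1) (conv (uN N) (vN N))
      ∧ Xnorm s (b - 1) (conv (uN N) (vN N)) ≤ C * (N : ℝ) ^ s := by
  obtain ⟨c₁, C₁, hc₁, hC₁, hbox⟩ :=
    exists_Xnorm_singleFreq_bounds s b (integral_weight_mul_box_sq_pos b)
  obtain ⟨c₂, C₂, hc₂, hC₂, htent⟩ :=
    exists_Xnorm_singleFreq_bounds s (b - 1) (integral_weight_mul_tent_sq_pos (b - 1))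
  refine ⟨min c₁ c₂, max C₁ C₂, lt_min hc₁ hc₂, hC₁.trans_le (le_max_left _ _), fun N hN => ?_⟩
  have hN : (1 : ℝ) ≤ N := by exact_mod_cast hN
  have hNs : 0 ≤ (N : ℝ) ^ s := Real.rpow_nonneg (by positivity) s
  have widen : ∀ {c C x : ℝ}, min c₁ c₂ ≤ c → C ≤ max C₁ C₂ → c * N ^ s ≤ x ∧ x ≤ C * N ^ s →
      min c₁ c₂ * N ^ s ≤ x ∧ x ≤ max C₁ C₂ * N ^ s := fun hc hC h =>
    ⟨(mul_le_mul_of_nonneg_right hc hNs).trans h.1, h.2.trans (mul_le_mul_of_nonneg_right hC hNs)⟩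
  have hconv (n : ℤ × ℤ) (τ : ℝ) : conv (uN N) (vN N) n τ
      = if n = ((N : ℤ), (N : ℤ)) then ((tent (τ + 2 * (N : ℝ) ^ 2) : ℝ) : ℂ) else 0 := by
    rw [conv_uN_vN, singleFreq, nsq_diag]
  refine ⟨fun n τ => ?_, fun n τ => ?_, ?_⟩
  · rw [hconv, tent, sub_add_eq_sub_sub, ← add_assoc]
  · rw [hconv]
    split_ifs
    · rw [Complex.norm_real, Real.norm_of_nonneg (tent_nonneg _)]; exact box_le_tent _
    · rw [norm_zero]
  rw [conv_uN_vN, uN_eq_singleFreq, vN_eq_singleFreq]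
  have hN2 : (N : ℝ) ^ 2 ≤ 2 * (N : ℝ) ^ 2 := by nlinarith
  obtain ⟨hu, hu'⟩ := widen (min_le_left _ _) (le_max_left _ _)
    (hbox N hN _ (nsq_natCast_zero N).ge ((nsq_natCast_zero N).trans_le hN2))
  obtain ⟨hv, hv'⟩ := widen (min_le_left _ _) (le_max_left _ _)
    (hbox N hN _ (nsq_zero_natCast N).ge ((nsq_zero_natCast N).trans_le hN2))
  obtain ⟨hw, hw'⟩ := widen (min_le_right _ _) (le_max_right _ _)
    (htent N hN _ ((nsq_diag N).symm ▸ hN2) (nsq_diag N).le)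
  exact ⟨hu, hu', hv, hv', hw, hw'⟩
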